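/- arXiv:1810.12969 — 2 statements merged into one kernel-verified Lean document; each statement's English description precedes it below -/
import Mathlib

section
/- (Lemma 1, first identity.) Assume η = r'/(2lr) with r, r' ∈ ℤ, r > 0 (so 2rlη = r' ∈ ℤ). Then for all integers r'', i'', j'' and every w ∈ ℂ: ∏_{k=0}^{r−1} θ^{(2l)}_{00}(2(r''+i''+j''+2k+1)lη + w) = ∏_{k=0}^{r−1} θ^{(2l)}_{00}(2(r''+i''+j''+2k+1)lη − w). With w = (u'−u)/2 this says that, under the assumption λ₀ − v = 2r''lη (r'' ∈ ℤ), the quantities A_{ij} := θ^{(2l)}_{00}(2r''lη + 2(i+j)lη + (u'−u)/2 + 2lη)/θ^{(2l)}_{00}(2r''lη + 2(i+j)lη + (u−u')/2 + 2lη) satisfy ∏_{k=0}^{r−1} A_{i''+k, j''+k} = 1 whenever the denominators are nonzero. -/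
noncomputable section

open Complex

/-- Theta function with characteristics `θ_{ab}(z,τ)`. -/
def theta (a b : ℝ) (z τ : ℂ) : ℂ :=
  ∑' n : ℤ, Complex.exp ((Real.pi : ℂ) * Complex.I * ((a : ℂ)/2 + (n : ℂ))^2 * τ +
    2 * (Real.pi : ℂ) * Complex.I * ((a : ℂ)/2 + (n : ℂ)) * ((b : ℂ)/2 + z))

/-- `[z;a]_k := ∏_{j=0}^{k-1} θ₁₁(z+a+2jη,τ) θ₁₁(-z+a+2jη,τ)`. -/
def brK (η τ z a : ℂ) (k : ℕ) : ℂ :=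
  ∏ j ∈ Finset.range k,
    theta 1 1 (z + a + 2*(j:ℂ)*η) τ * theta 1 1 (-z + a + 2*(j:ℂ)*η) τ

/-- `f_ε(λ,u,z) := [z;(ελ+u)/2+(-l+1)η]_{2l}`, with `tl = 2l`. -/
def fEps (η τ l : ℂ) (tl : ℕ) (ε lam u z : ℂ) : ℂ :=
  brK η τ z ((ε*lam + u)/2 + (-l+1)*η) tl

/-- `ω_λ(u;v)(z) := [z;(λ+u-v)/2+(-l+1)η]_{2l}`. -/
def omegaFn (η τ l : ℂ) (tl : ℕ) (lam u v z : ℂ) : ℂ :=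
  brK η τ z ((lam + u - v)/2 + (-l+1)*η) tl

def s0f (η τ z : ℂ) : ℂ := theta 1 1 η τ * theta 1 1 (2*z) τ
def s1f (η τ z : ℂ) : ℂ := theta 1 0 η τ * theta 1 0 (2*z) τ
def s2f (η τ z : ℂ) : ℂ := Complex.I * theta 0 0 η τ * theta 0 0 (2*z) τ
def s3f (η τ z : ℂ) : ℂ := theta 0 1 η τ * theta 0 1 (2*z) τ

/-- The difference operator `ρ^l(S^a)` associated to the coefficient function `s`. -/
def rhoS (η τ l : ℂ) (s : ℂ → ℂ) : (ℂ → ℂ) →ₗ[ℂ] (ℂ → ℂ) where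
  toFun f := fun z =>
    (s (z - l*η) * f (z + η) - s (-z - l*η) * f (z - η)) / theta 1 1 (2*z) τ
  map_add' f g := by
    funext z
    simp only [Pi.add_apply]
    ring
  map_smul' c f := by
    funext z
    simp only [Pi.smul_apply, smul_eq_mul, RingHom.id_apply]
    ring

def W0 (η τ u : ℂ) : ℂ := theta 1 1 u τ / theta 1 1 η τ
def W1 (η τ u : ℂ) : ℂ := theta 1 0 u τ / theta 1 0 η τ
def W2 (η τ u : ℂ) : ℂ := theta 0 0 u τ / theta 0 0 η τ
def W3 (η τ u : ℂ) : ℂ := theta 0 1 u τ / theta 0 1 η τ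

/-- `θ^{(2l)}_{00}(u) := ∏_{j=0}^{2l-1} θ₀₀(u+(2j-2l+1)η,τ)`, with `tl = 2l`. -/
def theta2l (η τ : ℂ) (tl : ℕ) (u : ℂ) : ℂ :=
  ∏ j ∈ Finset.range tl, theta 0 0 (u + (2*(j:ℂ) - (tl:ℂ) + 1)*η) τ

/-- The gauge transformation matrix `M_λ(v)`. -/
def Mlam (τ lam v : ℂ) : Matrix (Fin 2) (Fin 2) ℂ :=
  !![-theta 0 0 ((lam - v)/2) (τ/2), -theta 0 0 ((lam + v)/2) (τ/2);
     theta 0 1 ((lam - v)/2) (τ/2), theta 0 1 ((lam + v)/2) (τ/2)]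

/-- The `L`-operator as a 2×2 matrix of difference operators. -/
def LopM (η τ l u : ℂ) : Matrix (Fin 2) (Fin 2) (Module.End ℂ (ℂ → ℂ)) :=
  !![W0 η τ u • rhoS η τ l (s0f η τ) + W3 η τ u • rhoS η τ l (s3f η τ),
     W1 η τ u • rhoS η τ l (s1f η τ) - (Complex.I * W2 η τ u) • rhoS η τ l (s2f η τ);
     W1 η τ u • rhoS η τ l (s1f η τ) + (Complex.I * W2 η τ u) • rhoS η τ l (s2f η τ),
     W0 η τ u • rhoS η τ l (s0f η τ) - W3 η τ u • rhoS η τ l (s3f η τ)]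

/-- `N := adj(M_{λ₀+4(j+ε)lη}(v)) · L(u) · M_{λ₀+4jlη}(v)`. -/
def NMat (η τ l lam0 v u : ℂ) (j : ℤ) (ε : ℂ) :
    Matrix (Fin 2) (Fin 2) (Module.End ℂ (ℂ → ℂ)) :=
  ((Mlam τ (lam0 + 4*((j:ℂ)+ε)*l*η) v).adjugate).map
      (algebraMap ℂ (Module.End ℂ (ℂ → ℂ))) *
    LopM η τ l u *
    (Mlam τ (lam0 + 4*(j:ℂ)*l*η) v).map (algebraMap ℂ (Module.End ℂ (ℂ → ℂ)))

/-- The kernel `μ(z,w)` of the Sklyanin form. -/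
def muK (η τ : ℂ) (tl : ℕ) (z w : ℂ) : ℂ :=
  theta 1 1 (2*z) τ * theta 1 1 (2*w) τ /
    ∏ j ∈ Finset.range (tl + 2),
      (theta 0 0 (z + w + (2*(j:ℂ) - (tl:ℂ) - 1)*η) τ *
       theta 0 0 (z - w + (2*(j:ℂ) - (tl:ℂ) - 1)*η) τ)

/-- Integrand of the Sklyanin form. -/
def sklIntegrand (η τ : ℂ) (tl : ℕ) (f g : ℂ → ℂ) (x y : ℝ) : ℂ :=
  (starRingEnd ℂ) (f ((x:ℂ) + (y:ℂ)*Complex.I)) * g ((x:ℂ) + (y:ℂ)*Complex.I) *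
    muK η τ tl ((x:ℂ) + (y:ℂ)*Complex.I) ((x:ℂ) - (y:ℂ)*Complex.I)

/-- The Sklyanin form `⟨f,g⟩` (with `τ = i t₀`). -/
def sklForm (η τ : ℂ) (tl : ℕ) (t0 : ℝ) (f g : ℂ → ℂ) : ℂ :=
  ∫ x in (0:ℝ)..1, ∫ y in (0:ℝ)..t0, sklIntegrand η τ tl f g x y

/-- The constant `C_{2l}`. -/
def C2l (η τ : ℂ) (tl : ℕ) : ℂ :=
  (-2*η * Complex.exp (3*(Real.pi:ℂ)*Complex.I*τ/4)) /
    (theta 1 1 (2*((tl:ℂ)+1)*η) τ *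
      ∏' j : ℕ, (1 - Complex.exp (2*(Real.pi:ℂ)*Complex.I*((j:ℂ)+1)*τ))^3)
lemma theta00_neg (z τ : ℂ) : theta 0 0 (-z) τ = theta 0 0 z τ := by
  unfold theta
  conv_rhs => rw [← (Equiv.neg ℤ).tsum_eq]
  apply tsum_congr
  intro n
  simp only [Equiv.neg_apply, Int.cast_neg]
  congr 1
  push_cast
  ring

lemma theta00_add_int (z τ : ℂ) (m : ℤ) : theta 0 0 (z + (m:ℂ)) τ = theta 0 0 z τ := by
  unfold theta
  apply tsum_congr
  intro n
  rw [show ((Real.pi : ℂ) * Complex.I * (((0:ℝ):ℂ)/2 + (n:ℂ))^2 * τ +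
      2 * (Real.pi : ℂ) * Complex.I * (((0:ℝ):ℂ)/2 + (n:ℂ)) * (((0:ℝ):ℂ)/2 + (z + (m:ℂ))))
      = ((Real.pi : ℂ) * Complex.I * (((0:ℝ):ℂ)/2 + (n:ℂ))^2 * τ +
      2 * (Real.pi : ℂ) * Complex.I * (((0:ℝ):ℂ)/2 + (n:ℂ)) * (((0:ℝ):ℂ)/2 + z))
      + ((n*m : ℤ):ℂ) * (2 * (Real.pi:ℂ) * Complex.I) by push_cast; ring,
    Complex.exp_add, Complex.exp_int_mul_two_pi_mul_I, mul_one]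

lemma theta2l_neg (η τ : ℂ) (tl : ℕ) (u : ℂ) : theta2l η τ tl (-u) = theta2l η τ tl u := by
  unfold theta2l
  rw [← Finset.prod_range_reflect]
  apply Finset.prod_congr rfl
  intro j hj
  rw [Finset.mem_range] at hj
  rw [← theta00_neg]
  have hc : ((tl - 1 - j : ℕ) : ℂ) = (tl:ℂ) - 1 - (j:ℂ) := by
    have h1 : tl - 1 - j = tl - (1 + j) := by omega
    rw [h1]
    push_cast [Nat.cast_sub (by omega : 1 + j ≤ tl)]
    ring
  congr 1
  rw [hc]
  ring

lemma theta2l_add_int (η τ : ℂ) (tl : ℕ) (u : ℂ) (m : ℤ) :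
    theta2l η τ tl (u + (m:ℂ)) = theta2l η τ tl u := by
  unfold theta2l
  apply Finset.prod_congr rfl
  intro j _
  rw [show u + (m:ℂ) + (2*(j:ℂ) - (tl:ℂ) + 1)*η = (u + (2*(j:ℂ) - (tl:ℂ) + 1)*η) + (m:ℂ) by ring,
    theta00_add_int]

lemma key_id (η τ l : ℂ) (tl : ℕ) (r : ℕ) (r' : ℤ) (hr : 0 < r) (hl : l ≠ 0)
    (hη : η = (r':ℂ) / (2*l*(r:ℂ))) (s : ℤ) (w : ℂ) :
    ∏ k ∈ Finset.range r, theta2l η τ tl (2*((s:ℂ)+2*(k:ℂ)+1)*l*η + w)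
      = ∏ k ∈ Finset.range r, theta2l η τ tl (2*((s:ℂ)+2*(k:ℂ)+1)*l*η - w) := by
  have hrC : ((r:ℕ):ℂ) ≠ 0 := Nat.cast_ne_zero.mpr hr.ne'
  have hle : 2*l*η*(r:ℂ) = (r':ℂ) := by rw [hη]; field_simp
  set σ : ℕ → ℕ := fun k => ((-(s+1) - (k:ℤ)) % (r:ℤ)).toNat with hσ
  have hrZ : 0 < (r:ℤ) := by exact_mod_cast hr
  have hσlt : ∀ k, σ k < r := by
    intro k
    have h1 := Int.emod_lt_of_pos (-(s+1) - (k:ℤ)) hrZ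
    have h2 := Int.emod_nonneg (-(s+1) - (k:ℤ)) hrZ.ne'
    simp only [hσ]
    omega
  have hσcast : ∀ k, ((σ k : ℕ) : ℤ) = (-(s+1) - (k:ℤ)) % (r:ℤ) := by
    intro k
    have h2 := Int.emod_nonneg (-(s+1) - (k:ℤ)) hrZ.ne'
    simp only [hσ]
    exact Int.toNat_of_nonneg h2
  have hσσ : ∀ k < r, σ (σ k) = k := by
    intro k hk
    have h1 : ((σ (σ k) : ℕ) : ℤ) = ((k:ℕ):ℤ) := by
      rw [hσcast, hσcast]
      rw [Int.sub_emod (-(s+1)), Int.emod_emod_of_dvd _ dvd_rfl, ← Int.sub_emod]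
      have : -(s+1) - (-(s+1) - (k:ℤ)) = (k:ℤ) := by ring
      rw [this, Int.emod_eq_of_lt (by positivity) (by exact_mod_cast hk)]
    exact_mod_cast h1
  have hdvd : ∀ k, (r:ℤ) ∣ (s + 1 + k + (σ k : ℤ)) := by
    intro k
    apply Int.dvd_of_emod_eq_zero
    rw [Int.add_emod (s+1+k), hσcast, Int.emod_emod_of_dvd _ dvd_rfl, ← Int.add_emod]
    have : s + 1 + (k:ℤ) + (-(s+1) - (k:ℤ)) = 0 := by ring
    rw [this, Int.zero_emod]
  have hterm : ∀ k < r, theta2l η τ tl (2*((s:ℂ)+2*((σ k : ℕ):ℂ)+1)*l*η - w)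
      = theta2l η τ tl (2*((s:ℂ)+2*((k:ℕ):ℂ)+1)*l*η + w) := by
    intro k hk
    obtain ⟨m, hm⟩ := hdvd k
    have e1 : (s:ℂ) + 1 + (k:ℂ) + ((σ k : ℕ):ℂ) = (r:ℂ) * (m:ℂ) := by exact_mod_cast congrArg (Int.cast : ℤ → ℂ) hm
    have harg : 2*((s:ℂ)+2*((σ k : ℕ):ℂ)+1)*l*η - w
        = -(2*((s:ℂ)+2*((k:ℕ):ℂ)+1)*l*η + w) + ((2*r'*m : ℤ):ℂ) := by
      push_cast
      linear_combination (4*l*η) * e1 + (2*(m:ℂ)) * hle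
    rw [harg, theta2l_add_int, theta2l_neg]
  exact Finset.prod_nbij' σ σ (fun k _ => Finset.mem_range.mpr (hσlt k))
      (fun k _ => Finset.mem_range.mpr (hσlt k))
      (fun k hk => hσσ k (Finset.mem_range.mp hk))
      (fun k hk => hσσ k (Finset.mem_range.mp hk))
      (fun k hk => (hterm k (Finset.mem_range.mp hk)).symm)


/-- Lemma 1, first identity, and `∏ A_{i''+k,j''+k} = 1`. -/
theorem stmt9 (τ : ℂ) (hτ : 0 < τ.im) (η l : ℂ) (tl : ℕ) (htl : 0 < tl)
    (hl : (tl:ℂ) = 2*l)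
    (r : ℕ) (r' : ℤ) (hr : 0 < r) (hη : η = (r':ℂ) / (2*l*(r:ℂ))) :
    (∀ r'' i'' j'' : ℤ, ∀ w : ℂ,
      ∏ k ∈ Finset.range r,
          theta2l η τ tl (2*((r'':ℂ)+(i'':ℂ)+(j'':ℂ)+2*(k:ℂ)+1)*l*η + w)
        = ∏ k ∈ Finset.range r,
          theta2l η τ tl (2*((r'':ℂ)+(i'':ℂ)+(j'':ℂ)+2*(k:ℂ)+1)*l*η - w)) ∧
    (∀ r'' i'' j'' : ℤ, ∀ u u' : ℂ,
      (∀ k ∈ Finset.range r,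
        theta2l η τ tl (2*(r'':ℂ)*l*η + 2*(((i'':ℂ)+(k:ℂ))+((j'':ℂ)+(k:ℂ)))*l*η
          + (u-u')/2 + 2*l*η) ≠ 0) →
      ∏ k ∈ Finset.range r,
        (theta2l η τ tl (2*(r'':ℂ)*l*η + 2*(((i'':ℂ)+(k:ℂ))+((j'':ℂ)+(k:ℂ)))*l*η
            + (u'-u)/2 + 2*l*η) /
         theta2l η τ tl (2*(r'':ℂ)*l*η + 2*(((i'':ℂ)+(k:ℂ))+((j'':ℂ)+(k:ℂ)))*l*η
            + (u-u')/2 + 2*l*η)) = 1) := by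
  have hlne : l ≠ 0 := by
    intro h
    rw [h, mul_zero] at hl
    exact (Nat.cast_ne_zero.mpr htl.ne') hl
  constructor
  · intro r'' i'' j'' w
    have h := key_id η τ l tl r r' hr hlne hη (r''+i''+j'') w
    push_cast at h
    exact h
  · intro r'' i'' j'' u u' hden
    have hnum : ∀ k : ℕ, 2*(r'':ℂ)*l*η + 2*(((i'':ℂ)+(k:ℂ))+((j'':ℂ)+(k:ℂ)))*l*η + (u'-u)/2 + 2*l*η
        = 2*(((r''+i''+j'':ℤ):ℂ)+2*(k:ℂ)+1)*l*η + (u'-u)/2 := by intro k; push_cast; ring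
    have hden2 : ∀ k : ℕ, 2*(r'':ℂ)*l*η + 2*(((i'':ℂ)+(k:ℂ))+((j'':ℂ)+(k:ℂ)))*l*η + (u-u')/2 + 2*l*η
        = 2*(((r''+i''+j'':ℤ):ℂ)+2*(k:ℂ)+1)*l*η - (u'-u)/2 := by intro k; push_cast; ring
    simp only [hnum, hden2] at hden ⊢
    rw [Finset.prod_div_distrib, key_id η τ l tl r r' hr hlne hη (r''+i''+j'') ((u'-u)/2),
      div_self (Finset.prod_ne_zero_iff.mpr hden)]
end
end

section
/- Fix λ₀, v, u ∈ ℂ, j ∈ ℤ, and ε ∈ {+1,−1}, and assume θ_{11}(η,τ), θ_{10}(η,τ), θ_{00}(η,τ), θ_{01}(η,τ) are all nonzero. Let N := adj(M_{λ₀+4(j+ε)lη}(v)) · L(u) · M_{λ₀+4jlη}(v). Then the (2,2) entry of N satisfies θ_{11}(λ₀+4(j+ε)lη,τ) · (N_{22} ω_{ε(λ₀+4jlη)}(u; εv))(z) = det(M_{λ₀+4(j+ε)lη}(v)) · 2θ_{11}(u−2lη,τ) · θ_{11}(λ₀+4jlη,τ) · ω_{ε(λ₀+4jlη)}(u+2η;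 εv)(z) for every z ∈ ℂ with θ_{11}(2z,τ) ≠ 0; equivalently, when θ_{11}(λ₀+4(j+ε)lη,τ) ≠ 0, the twisted matrix element δ acts on ω with eigenfactor 2θ_{11}(u−2lη,τ)·θ_{11}(λ₀+4jlη,τ)/θ_{11}(λ₀+4(j+ε)lη,τ) and shift u ↦ u+2η. -/
noncomputable section

open Complex

/-!
Conjugating by the gauge matrices turns the (2,2) entry of `L(u)` into a single difference
operator `ρ^l` whose coefficient is a product of four `θ₁₁`'s. The entries of `M_λ(v)` are
half-period theta functions; products of two of them are sums of products of full-period ones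
at `x ± y` (split the double series over `ℤ²` by the parity of `n + m`). This turns the four
Sklyanin weights into the left side of Riemann's theta relation, which factorises.
For `λ' = λ + 4εlη`, one pair of factors of the coefficient cancels against the shift of `ω`
by `±η`, and what is left is the three-term addition formula for `θ₁₁`. Changing the sign `ε`
only permutes the factors, `θ₁₁` being odd.
-/

def thetaTerm (a b : ℝ) (z τ : ℂ) (n : ℤ) : ℂ :=
  Complex.exp ((Real.pi : ℂ) * Complex.I * ((a : ℂ)/2 + (n : ℂ))^2 * τ +
    2 * (Real.pi : ℂ) * Complex.I * ((a : ℂ)/2 + (n : ℂ)) * ((b : ℂ)/2 + z))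

lemma thetaTerm_eq_mul_jacobiTheta₂_term (a b : ℝ) (z τ : ℂ) (n : ℤ) :
    thetaTerm a b z τ n = Complex.exp ((Real.pi : ℂ) * Complex.I * (a:ℂ)^2 * τ / 4 +
      (Real.pi : ℂ) * Complex.I * (a:ℂ) * ((b:ℂ)/2 + z)) *
      jacobiTheta₂_term n ((b:ℂ)/2 + z + (a:ℂ)*τ/2) τ := by
  rw [thetaTerm, jacobiTheta₂_term, ← Complex.exp_add]
  congr 1
  ring

lemma summable_norm_thetaTerm {τ : ℂ} (hτ : 0 < τ.im) (a b : ℝ) (z : ℂ) :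
    Summable fun n : ℤ => ‖thetaTerm a b z τ n‖ := by
  simp_rw [thetaTerm_eq_mul_jacobiTheta₂_term, norm_mul]
  exact ((summable_jacobiTheta₂_term_iff _ _).mpr hτ).norm.mul_left _

lemma hasSum_thetaTerm {τ : ℂ} (hτ : 0 < τ.im) (a b : ℝ) (z : ℂ) :
    HasSum (thetaTerm a b z τ) (theta a b z τ) :=
  (summable_norm_thetaTerm hτ a b z).of_norm.hasSum

lemma hasSum_thetaTerm_mul_thetaTerm {τ : ℂ} (hτ : 0 < τ.im) (a b b' : ℝ) (x y : ℂ) :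
    HasSum (fun nm : ℤ × ℤ => thetaTerm a b x τ nm.1 * thetaTerm a b' y τ nm.2)
      (theta a b x τ * theta a b' y τ) :=
  (hasSum_thetaTerm hτ a b x).mul (hasSum_thetaTerm hτ a b' y)
    (summable_mul_of_summable_norm (summable_norm_thetaTerm hτ a b x)
      (summable_norm_thetaTerm hτ a b' y))

lemma theta_char_add_two (a b : ℝ) (z τ : ℂ) :
    theta a (b + 2) z τ = Complex.exp ((Real.pi : ℂ) * Complex.I * a) * theta a b z τ := by
  rw [theta, theta, ← tsum_mul_left]
  refine tsum_congr fun n => ?_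
  rw [← Complex.exp_add, Complex.exp_eq_exp_iff_exists_int]
  exact ⟨n, by push_cast; ring⟩

lemma theta_zero_char_add_two (b : ℝ) (z τ : ℂ) : theta 0 (b + 2) z τ = theta 0 b z τ := by
  simp [theta_char_add_two]

lemma theta_one_char_add_two (b : ℝ) (z τ : ℂ) : theta 1 (b + 2) z τ = -theta 1 b z τ := by
  simp [theta_char_add_two, Complex.exp_pi_mul_I]

lemma theta11_neg (z τ : ℂ) : theta 1 1 (-z) τ = -theta 1 1 z τ := by
  rw [theta, theta, ← tsum_neg, ← (Equiv.subLeft (-1 : ℤ)).tsum_eq]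
  refine tsum_congr fun n => ?_
  conv_rhs => rw [← neg_one_mul, ← Complex.exp_pi_mul_I, ← Complex.exp_add]
  rw [Complex.exp_eq_exp_iff_exists_int]
  exact ⟨-n - 1, by simp only [Equiv.subLeft_apply]; push_cast; ring⟩

def parityEquiv : ℤ × ℤ ⊕ ℤ × ℤ ≃ ℤ × ℤ where
  toFun := Sum.elim (fun pq => (pq.1 + pq.2, pq.1 - pq.2))
    (fun pq => (pq.1 + pq.2 + 1, pq.1 - pq.2))
  invFun nm := if 2 ∣ nm.1 + nm.2 then .inl ((nm.1 + nm.2) / 2, (nm.1 - nm.2) / 2)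
    else .inr ((nm.1 + nm.2 - 1) / 2, (nm.1 - nm.2 - 1) / 2)
  left_inv := by
    rintro (⟨p, q⟩ | ⟨p, q⟩) <;> dsimp only [Sum.elim_inl, Sum.elim_inr] <;> split_ifs
    all_goals first | omega | (simp only [Sum.inl.injEq, Sum.inr.injEq, Prod.mk.injEq]; omega)
  right_inv := by
    rintro ⟨n, m⟩
    dsimp only
    split_ifs <;> simp only [Sum.elim_inl, Sum.elim_inr, Prod.mk.injEq] <;> omega

lemma theta_half_mul_theta_half {τ : ℂ} (hτ : 0 < τ.im) (b b' : ℝ) (x y : ℂ) :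
    theta 0 b x (τ/2) * theta 0 b' y (τ/2)
      = theta 0 (b+b') (x+y) τ * theta 0 (b-b') (x-y) τ
      + theta 1 (b+b') (x+y) τ * theta 1 (b-b') (x-y) τ := by
  have hτ2 : 0 < (τ/2).im := by rw [Complex.div_ofNat_im]; positivity
  refine (hasSum_thetaTerm_mul_thetaTerm hτ2 0 b b' x y).unique
    ((Equiv.hasSum_iff parityEquiv).mp (HasSum.sum ?_ ?_))
  · convert hasSum_thetaTerm_mul_thetaTerm hτ 0 (b+b') (b-b') (x+y) (x-y) using 2 with pq
    simp only [Function.comp_apply, parityEquiv, Equiv.coe_fn_mk, Sum.elim_inl, thetaTerm,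
      ← Complex.exp_add]
    congr 1; push_cast; ring
  · convert hasSum_thetaTerm_mul_thetaTerm hτ 1 (b+b') (b-b') (x+y) (x-y) using 2 with pq
    simp only [Function.comp_apply, parityEquiv, Equiv.coe_fn_mk, Sum.elim_inr, thetaTerm,
      ← Complex.exp_add]
    congr 1; push_cast; ring

lemma theta00_half_mul_theta00_half {τ : ℂ} (hτ : 0 < τ.im) (x y : ℂ) :
    theta 0 0 x (τ/2) * theta 0 0 y (τ/2)
      = theta 0 0 (x+y) τ * theta 0 0 (x-y) τ + theta 1 0 (x+y) τ * theta 1 0 (x-y) τ := by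
  simpa using theta_half_mul_theta_half hτ 0 0 x y

lemma theta01_half_mul_theta01_half {τ : ℂ} (hτ : 0 < τ.im) (x y : ℂ) :
    theta 0 1 x (τ/2) * theta 0 1 y (τ/2)
      = theta 0 0 (x+y) τ * theta 0 0 (x-y) τ - theta 1 0 (x+y) τ * theta 1 0 (x-y) τ := by
  have h := theta_half_mul_theta_half hτ 1 1 x y
  rw [show (1 + 1 : ℝ) = 0 + 2 by norm_num, theta_zero_char_add_two, theta_one_char_add_two,
    sub_self] at h
  linear_combination h

lemma theta01_half_mul_theta00_half {τ : ℂ} (hτ : 0 < τ.im) (x y : ℂ) :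
    theta 0 1 x (τ/2) * theta 0 0 y (τ/2)
      = theta 0 1 (x+y) τ * theta 0 1 (x-y) τ + theta 1 1 (x+y) τ * theta 1 1 (x-y) τ := by
  simpa using theta_half_mul_theta_half hτ 1 0 x y

lemma theta00_half_mul_theta01_half {τ : ℂ} (hτ : 0 < τ.im) (x y : ℂ) :
    theta 0 0 x (τ/2) * theta 0 1 y (τ/2)
      = theta 0 1 (x+y) τ * theta 0 1 (x-y) τ - theta 1 1 (x+y) τ * theta 1 1 (x-y) τ := by
  have h := theta_half_mul_theta_half hτ 0 1 x y
  have h0 := theta_zero_char_add_two (-1) (x-y) τ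
  have h1 := theta_one_char_add_two (-1) (x-y) τ
  norm_num at h h0 h1
  linear_combination h - theta 0 1 (x+y) τ * h0 + theta 1 1 (x+y) τ * h1

lemma theta00_add_mul_theta00_sub {τ : ℂ} (hτ : 0 < τ.im) (x y : ℂ) :
    theta 0 0 (x+y) τ * theta 0 0 (x-y) τ
      = (theta 0 0 x (τ/2) * theta 0 0 y (τ/2) + theta 0 1 x (τ/2) * theta 0 1 y (τ/2))/2 := by
  linear_combination
    -(theta00_half_mul_theta00_half hτ x y + theta01_half_mul_theta01_half hτ x y)/2

lemma theta10_add_mul_theta10_sub {τ : ℂ} (hτ : 0 < τ.im) (x y : ℂ) :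
    theta 1 0 (x+y) τ * theta 1 0 (x-y) τ
      = (theta 0 0 x (τ/2) * theta 0 0 y (τ/2) - theta 0 1 x (τ/2) * theta 0 1 y (τ/2))/2 := by
  linear_combination
    -(theta00_half_mul_theta00_half hτ x y - theta01_half_mul_theta01_half hτ x y)/2

lemma theta01_add_mul_theta01_sub {τ : ℂ} (hτ : 0 < τ.im) (x y : ℂ) :
    theta 0 1 (x+y) τ * theta 0 1 (x-y) τ
      = (theta 0 1 x (τ/2) * theta 0 0 y (τ/2) + theta 0 0 x (τ/2) * theta 0 1 y (τ/2))/2 := by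
  linear_combination
    -(theta01_half_mul_theta00_half hτ x y + theta00_half_mul_theta01_half hτ x y)/2

lemma theta11_add_mul_theta11_sub {τ : ℂ} (hτ : 0 < τ.im) (x y : ℂ) :
    theta 1 1 (x+y) τ * theta 1 1 (x-y) τ
      = (theta 0 1 x (τ/2) * theta 0 0 y (τ/2) - theta 0 0 x (τ/2) * theta 0 1 y (τ/2))/2 := by
  linear_combination
    -(theta01_half_mul_theta00_half hτ x y - theta00_half_mul_theta01_half hτ x y)/2

lemma theta_riemann_relation {τ : ℂ} (hτ : 0 < τ.im) (p q x y : ℂ) :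
    theta 1 1 (p+q) τ * theta 1 1 (p-q) τ * (theta 1 1 (x+y) τ * theta 1 1 (x-y) τ)
    + theta 1 0 (p+q) τ * theta 1 0 (p-q) τ * (theta 1 0 (x+y) τ * theta 1 0 (x-y) τ)
    - theta 0 0 (p+q) τ * theta 0 0 (p-q) τ * (theta 0 0 (x+y) τ * theta 0 0 (x-y) τ)
    + theta 0 1 (p+q) τ * theta 0 1 (p-q) τ * (theta 0 1 (x+y) τ * theta 0 1 (x-y) τ)
    = -2 * (theta 1 1 (q+x) τ * theta 1 1 (q-x) τ) * (theta 1 1 (p+y) τ * theta 1 1 (p-y) τ) := by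
  simp only [theta11_add_mul_theta11_sub hτ, theta10_add_mul_theta10_sub hτ,
    theta00_add_mul_theta00_sub hτ, theta01_add_mul_theta01_sub hτ]
  ring

lemma theta11_three_term_relation {τ : ℂ} (hτ : 0 < τ.im) (x y m n : ℂ) :
    theta 1 1 (x+m) τ * theta 1 1 (x-m) τ * (theta 1 1 (y+n) τ * theta 1 1 (y-n) τ)
    - theta 1 1 (y+m) τ * theta 1 1 (y-m) τ * (theta 1 1 (x+n) τ * theta 1 1 (x-n) τ)
    = theta 1 1 (x+y) τ * theta 1 1 (x-y) τ * (theta 1 1 (m+n) τ * theta 1 1 (m-n) τ) := by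
  simp only [theta11_add_mul_theta11_sub hτ]
  ring

lemma det_Mlam {τ : ℂ} (hτ : 0 < τ.im) (lam v : ℂ) :
    (Mlam τ lam v).det = -2 * theta 1 1 lam τ * theta 1 1 v τ := by
  rw [Mlam, Matrix.det_fin_two_of]
  linear_combination (norm := ring_nf)
    -2 * theta11_add_mul_theta11_sub hτ ((lam - v)/2) ((lam + v)/2)
      + 2 * theta 1 1 lam τ * theta11_neg v τ

lemma gaugeEntry_eq_sum {τ : ℂ} (hτ : 0 < τ.im) (η l u lam lam' v : ℂ) :
    ((Mlam τ lam' v).adjugate.map (algebraMap ℂ (Module.End ℂ (ℂ → ℂ))) * LopM η τ l u *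
        (Mlam τ lam v).map (algebraMap ℂ (Module.End ℂ (ℂ → ℂ)))) 1 1
      = (2 * (theta 1 1 ((lam'-v)/2 + (lam+v)/2) τ * theta 1 1 ((lam'-v)/2 - (lam+v)/2) τ)
            * W0 η τ u) • rhoS η τ l (s0f η τ)
        + (2 * (theta 1 0 ((lam'-v)/2 + (lam+v)/2) τ * theta 1 0 ((lam'-v)/2 - (lam+v)/2) τ)
            * W1 η τ u) • rhoS η τ l (s1f η τ)
        + (2 * Complex.I * (theta 0 0 ((lam'-v)/2 + (lam+v)/2) τ
            * theta 0 0 ((lam'-v)/2 - (lam+v)/2) τ) * W2 η τ u) • rhoS η τ l (s2f η τ)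
        + (2 * (theta 0 1 ((lam'-v)/2 + (lam+v)/2) τ * theta 0 1 ((lam'-v)/2 - (lam+v)/2) τ)
            * W3 η τ u) • rhoS η τ l (s3f η τ) := by
  simp only [theta11_add_mul_theta11_sub hτ, theta10_add_mul_theta10_sub hτ,
    theta00_add_mul_theta00_sub hτ, theta01_add_mul_theta01_sub hτ]
  ext f z
  simp only [Matrix.mul_apply, Fin.sum_univ_two, Matrix.map_apply, Matrix.adjugate_fin_two,
    Mlam, LopM, Matrix.of_apply, Matrix.cons_val', Matrix.cons_val_zero, Matrix.cons_val_one,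
    Matrix.empty_val', Matrix.cons_val_fin_one,
    Module.End.mul_apply, LinearMap.add_apply, LinearMap.sub_apply, LinearMap.smul_apply,
    Module.algebraMap_end_apply, map_add, map_sub, map_smul, Pi.add_apply, Pi.sub_apply,
    Pi.smul_apply, smul_eq_mul]
  ring

def gaugeCoeff (τ u lam lam' v w : ℂ) : ℂ :=
  theta 1 1 (u/2 - w + (lam'-v)/2) τ * theta 1 1 (u/2 - w - (lam'-v)/2) τ *
    (theta 1 1 (u/2 + w + (lam+v)/2) τ * theta 1 1 (u/2 + w - (lam+v)/2) τ)

lemma theta11_mul_rhoS_apply (η τ l : ℂ) (s f : ℂ → ℂ) {z : ℂ} (hz : theta 1 1 (2*z) τ ≠ 0) :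
    theta 1 1 (2*z) τ * rhoS η τ l s f z = s (z - l*η) * f (z+η) - s (-z - l*η) * f (z-η) :=
  mul_div_cancel₀ _ hz

lemma gaugeEntry_eq_rhoS {τ : ℂ} (hτ : 0 < τ.im) {η : ℂ} (l u lam lam' v : ℂ)
    (h11 : theta 1 1 η τ ≠ 0) (h10 : theta 1 0 η τ ≠ 0)
    (h00 : theta 0 0 η τ ≠ 0) (h01 : theta 0 1 η τ ≠ 0) :
    ((Mlam τ lam' v).adjugate.map (algebraMap ℂ (Module.End ℂ (ℂ → ℂ))) * LopM η τ l u *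
        (Mlam τ lam v).map (algebraMap ℂ (Module.End ℂ (ℂ → ℂ)))) 1 1
      = rhoS η τ l (fun w => -4 * gaugeCoeff τ u lam lam' v w) := by
  have hW0 (w : ℂ) : W0 η τ u * s0f η τ w = theta 1 1 u τ * theta 1 1 (2*w) τ := by
    rw [W0, s0f]; field_simp
  have hW1 (w : ℂ) : W1 η τ u * s1f η τ w = theta 1 0 u τ * theta 1 0 (2*w) τ := by
    rw [W1, s1f]; field_simp
  have hW2 (w : ℂ) : Complex.I * (W2 η τ u * s2f η τ w) = -(theta 0 0 u τ * theta 0 0 (2*w) τ) := by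
    rw [W2, s2f]; field_simp; rw [Complex.I_sq]; ring
  have hW3 (w : ℂ) : W3 η τ u * s3f η τ w = theta 0 1 u τ * theta 0 1 (2*w) τ := by
    rw [W3, s3f]; field_simp
  have hR (w : ℂ) := theta_riemann_relation hτ (u/2 + w) (u/2 - w) ((lam'-v)/2) ((lam+v)/2)
  rw [gaugeEntry_eq_sum hτ]
  ext f z
  simp only [LinearMap.add_apply, LinearMap.smul_apply, Pi.add_apply, Pi.smul_apply, smul_eq_mul,
    rhoS, LinearMap.coe_mk, AddHom.coe_mk, mul_div_assoc', ← add_div]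
  congr 1
  simp only [gaugeCoeff]
  linear_combination (norm := ring_nf)
    2 * (theta 1 1 ((lam'-v)/2 + (lam+v)/2) τ * theta 1 1 ((lam'-v)/2 - (lam+v)/2) τ)
        * (f (z+η) * hW0 (z - l*η) - f (z-η) * hW0 (-z - l*η))
      + 2 * (theta 1 0 ((lam'-v)/2 + (lam+v)/2) τ * theta 1 0 ((lam'-v)/2 - (lam+v)/2) τ)
        * (f (z+η) * hW1 (z - l*η) - f (z-η) * hW1 (-z - l*η))
      + 2 * (theta 0 0 ((lam'-v)/2 + (lam+v)/2) τ * theta 0 0 ((lam'-v)/2 - (lam+v)/2) τ)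
        * (f (z+η) * hW2 (z - l*η) - f (z-η) * hW2 (-z - l*η))
      + 2 * (theta 0 1 ((lam'-v)/2 + (lam+v)/2) τ * theta 0 1 ((lam'-v)/2 - (lam+v)/2) τ)
        * (f (z+η) * hW3 (z - l*η) - f (z-η) * hW3 (-z - l*η))
      + 2 * f (z+η) * hR (z - l*η) - 2 * f (z-η) * hR (-z - l*η)

lemma brK_neg (η τ z c : ℂ) (k : ℕ) : brK η τ (-z) c k = brK η τ z c k := by
  simp only [brK, neg_neg, mul_comm]

lemma brK_add_eta (η τ z c : ℂ) (k : ℕ) :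
    brK η τ (z+η) c (k+1)
      = theta 1 1 (-z+c-η) τ * theta 1 1 (z+c+(2*k+1)*η) τ * brK η τ z (c+η) k := by
  rw [brK, brK, Finset.prod_mul_distrib, Finset.prod_mul_distrib, Finset.prod_range_succ,
    Finset.prod_range_succ']
  have hfst : ∀ j ∈ Finset.range k, theta 1 1 (z + η + c + 2*(j:ℂ)*η) τ
      = theta 1 1 (z + (c+η) + 2*(j:ℂ)*η) τ := fun j _ => by ring_nf
  have hsnd : ∀ j ∈ Finset.range k, theta 1 1 (-(z + η) + c + 2*((j+1 : ℕ):ℂ)*η) τ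
      = theta 1 1 (-z + (c+η) + 2*(j:ℂ)*η) τ := fun j _ => by push_cast; ring_nf
  rw [Finset.prod_congr rfl hfst, Finset.prod_congr rfl hsnd]
  push_cast
  ring_nf

lemma brK_sub_eta (η τ z c : ℂ) (k : ℕ) :
    brK η τ (z-η) c (k+1)
      = theta 1 1 (z+c-η) τ * theta 1 1 (-z+c+(2*k+1)*η) τ * brK η τ z (c+η) k := by
  rw [← brK_neg, neg_sub', sub_neg_eq_add, brK_add_eta, neg_neg, brK_neg]

lemma brK_succ (η τ z c : ℂ) (k : ℕ) :
    brK η τ z c (k+1) = brK η τ z c k * (theta 1 1 (z+c+2*k*η) τ * theta 1 1 (-z+c+2*k*η) τ) :=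
  Finset.prod_range_succ _ _

lemma gaugeCoeff_mul_omegaFn_sub {τ : ℂ} (hτ : 0 < τ.im) (η l : ℂ) (k : ℕ)
    (hl : (k:ℂ) + 1 = 2*l) (lam u v z : ℂ) :
    gaugeCoeff τ u lam (lam + 4*l*η) v (z - l*η) * omegaFn η τ l (k+1) lam u v (z+η)
      - gaugeCoeff τ u lam (lam + 4*l*η) v (-z - l*η) * omegaFn η τ l (k+1) lam u v (z-η)
      = theta 1 1 lam τ * theta 1 1 v τ * theta 1 1 (u - 2*l*η) τ * theta 1 1 (2*z) τ
          * omegaFn η τ l (k+1) lam (u + 2*η) v z := by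
  have hc : (lam + (u + 2*η) - v)/2 + (-l + 1)*η = (lam + u - v)/2 + (-l + 1)*η + η := by ring
  have hk : (k:ℂ) = 2*l - 1 := by linear_combination hl
  simp only [omegaFn, brK_add_eta, brK_sub_eta, hc]
  rw [brK_succ]
  simp only [gaugeCoeff, hk]
  have hK := theta11_three_term_relation hτ (u/2 - l*η - z) (u/2 - l*η + z) ((lam-v)/2) ((lam+v)/2)
  linear_combination (norm := ring_nf)
    theta 1 1 ((lam + u - v)/2 + 3*l*η + z) τ * theta 1 1 ((lam + u - v)/2 + 3*l*η - z) τ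
      * brK η τ z ((lam + u - v)/2 + (-l + 1)*η + η) k
      * (hK + theta 1 1 (u - 2*l*η) τ * theta 1 1 lam τ
          * (theta 1 1 (-v) τ * theta11_neg (2*z) τ - theta 1 1 (2*z) τ * theta11_neg v τ))

lemma gaugeCoeff_sign {ε : ℂ} (hε : ε = 1 ∨ ε = -1) (τ u lam v l η w : ℂ) :
    gaugeCoeff τ u lam (lam + 4*ε*l*η) v w
      = gaugeCoeff τ u (ε*lam) (ε*lam + 4*l*η) (ε*v) w := by
  rcases hε with rfl | rfl
  · simp only [one_mul, mul_one]
  · simp only [gaugeCoeff]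
    ring_nf

lemma theta11_mul_theta11_sign {ε : ℂ} (hε : ε = 1 ∨ ε = -1) (x y τ : ℂ) :
    theta 1 1 (ε*x) τ * theta 1 1 (ε*y) τ = theta 1 1 x τ * theta 1 1 y τ := by
  rcases hε with rfl | rfl <;> simp [theta11_neg]

/-- The (2,2) entry of `N` acts on `ω_{ε(λ₀+4jlη)}(u;εv)` with factor
`det M' · 2θ₁₁(u-2lη) · θ₁₁(λ₀+4jlη)/θ₁₁(λ₀+4(j+ε)lη)` and shift `u ↦ u+2η`. -/
theorem stmt18 (τ : ℂ) (hτ : 0 < τ.im) (η l : ℂ) (tl : ℕ) (htl : 0 < tl)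
    (hl : (tl:ℂ) = 2*l)
    (lam0 v u : ℂ) (j : ℤ) (ε : ℂ) (hε : ε = 1 ∨ ε = -1)
    (h11 : theta 1 1 η τ ≠ 0) (h10 : theta 1 0 η τ ≠ 0)
    (h00 : theta 0 0 η τ ≠ 0) (h01 : theta 0 1 η τ ≠ 0) :
    ∀ z : ℂ, theta 1 1 (2*z) τ ≠ 0 →
      theta 1 1 (lam0 + 4*((j:ℂ)+ε)*l*η) τ *
        ((NMat η τ l lam0 v u j ε 1 1)
          (fun w => omegaFn η τ l tl (ε*(lam0 + 4*(j:ℂ)*l*η)) u (ε*v) w) z)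
      = (Mlam τ (lam0 + 4*((j:ℂ)+ε)*l*η) v).det * (2 * theta 1 1 (u - 2*l*η) τ) *
          theta 1 1 (lam0 + 4*(j:ℂ)*l*η) τ *
          omegaFn η τ l tl (ε*(lam0 + 4*(j:ℂ)*l*η)) (u + 2*η) (ε*v) z := by
  intro z hz
  obtain ⟨k, rfl⟩ : ∃ k, tl = k + 1 := ⟨tl - 1, (Nat.succ_pred_eq_of_pos htl).symm⟩
  push_cast at hl
  set lam := lam0 + 4*(j:ℂ)*l*η
  rw [NMat, show lam0 + 4*((j:ℂ)+ε)*l*η = lam + 4*ε*l*η by ring,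
    gaugeEntry_eq_rhoS hτ l u lam _ v h11 h10 h00 h01, det_Mlam hτ]
  simp only [gaugeCoeff_sign hε]
  have hρ := theta11_mul_rhoS_apply η τ l
    (fun w => -4 * gaugeCoeff τ u (ε*lam) (ε*lam + 4*l*η) (ε*v) w)
    (fun w => omegaFn η τ l (k+1) (ε*lam) u (ε*v) w) hz
  have key := gaugeCoeff_mul_omegaFn_sub hτ η l k hl (ε*lam) u (ε*v) z
  rw [theta11_mul_theta11_sign hε] at key
  refine mul_left_cancel₀ hz ?_
  linear_combination theta 1 1 (lam + 4*ε*l*η) τ * hρ - 4 * theta 1 1 (lam + 4*ε*l*η) τ * key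
end
end
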